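/- arXiv:alg-geom/9712006 — 5 statements merged into one kernel-verified Lean document; each statement's English description precedes it below -/
import Mathlib

section
/- For every positive integer n there exists M such that for all m ≥ M, the quantity e(m,n) = ((2m+n-1)!/(2m)!)·∏_{k=1}^{m} 1/|ζ(1-2k)| satisfies e(m,n) < 1, and in particular e(m,n) is not an integer. -/
open Finset

/-- `e(m,n) = ((2m+n-1)!/(2m)!)·∏_{k=1}^m 1/|ζ(1-2k)|`. -/
noncomputable def eSeq (m n : ℕ) : ℝ :=
  (Nat.factorial (2 * m + n - 1) : ℝ) / (Nat.factorial (2 * m)) *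
    ∏ k ∈ Icc 1 m, 1 / ‖riemannZeta (1 - 2 * k)‖

/-!
Through the Bernoulli numbers, `ζ(2k) ≥ 1` gives `|ζ(1-2k)| ≥ 2·(2k-1)!/(2π)^{2k}`, so
`1/|ζ(1-2k)| → 0`. Passing from `m` to `m+1` multiplies `e(m,n)` by a rational factor bounded by
`(n+1)^2` and by `1/|ζ(-1-2m)|`, hence eventually by at most `1/2`; by the ratio test
`e(m,n) → 0`. A positive real number below `1` is not an integer.
-/

open Real Filter Topology Nat

lemma norm_riemannZeta_one_sub_two_mul_nat {k : ℕ} (hk : k ≠ 0) :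
    ‖riemannZeta (1 - 2 * k)‖ = |(bernoulli (2 * k) : ℝ)| / (2 * k) := by
  obtain ⟨j, hj⟩ : ∃ j, 2 * k = j + 1 := ⟨2 * k - 1, by omega⟩
  have hjC : (2 * k : ℂ) = j + 1 := by exact_mod_cast hj
  have hjR : (2 * k : ℝ) = j + 1 := by exact_mod_cast hj
  rw [show (1 : ℂ) - 2 * k = -(j : ℂ) by rw [hjC]; ring, riemannZeta_neg_nat_eq_bernoulli, ← hj,
    ← hjC]
  simp [Complex.norm_ratCast]

lemma factorial_div_le_abs_bernoulli_two_mul {k : ℕ} (hk : k ≠ 0) :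
    (2 * k)! / (2 ^ (2 * k - 1) * π ^ (2 * k)) ≤ |(bernoulli (2 * k) : ℝ)| := by
  have hζ : 1 ≤ 2 ^ (2 * k - 1) * π ^ (2 * k) * |(bernoulli (2 * k) : ℝ)| / (2 * k)! := by
    have := le_hasSum (hasSum_zeta_nat hk) 1 (fun j _ => by positivity)
    simpa [abs_div, abs_mul, abs_of_pos pi_pos] using this.trans (le_abs_self _)
  rwa [one_le_div (by positivity), ← div_le_iff₀' (by positivity)] at hζ

lemma two_mul_factorial_div_le_norm_riemannZeta_one_sub_two_mul_nat {k : ℕ} (hk : k ≠ 0) :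
    2 * (2 * k - 1)! / (2 * π) ^ (2 * k) ≤ ‖riemannZeta (1 - 2 * k)‖ := by
  obtain ⟨j, hj⟩ : ∃ j, 2 * k = j + 1 := ⟨2 * k - 1, by omega⟩
  have hjR : (2 * k : ℝ) = j + 1 := by exact_mod_cast hj
  have hB := factorial_div_le_abs_bernoulli_two_mul hk
  rw [norm_riemannZeta_one_sub_two_mul_nat hk, le_div_iff₀ (by positivity)]
  rw [hj, Nat.add_sub_cancel, factorial_succ] at hB
  rw [hj, Nat.add_sub_cancel, hjR]
  calc _ = (j + 1) * j ! / (2 ^ j * π ^ (j + 1)) := by rw [pow_succ, mul_pow]; field_simp; ring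
    _ ≤ _ := by exact_mod_cast hB

lemma norm_riemannZeta_one_sub_two_mul_nat_pos {k : ℕ} (hk : k ≠ 0) :
    0 < ‖riemannZeta (1 - 2 * k)‖ :=
  (by positivity : (0 : ℝ) < 2 * (2 * k - 1)! / (2 * π) ^ (2 * k)).trans_le
    (two_mul_factorial_div_le_norm_riemannZeta_one_sub_two_mul_nat hk)

lemma tendsto_inv_norm_riemannZeta_one_sub_two_mul_nat :
    Tendsto (fun k : ℕ => ‖riemannZeta (1 - 2 * k)‖⁻¹) atTop (𝓝 0) := by
  have hodd : Tendsto (fun k : ℕ => 2 * k - 1) atTop atTop :=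
    tendsto_atTop_atTop.2 fun b => ⟨b + 1, fun k hk => by omega⟩
  have hlim : Tendsto (fun k : ℕ => π * ((2 * π) ^ (2 * k - 1) / (2 * k - 1)!)) atTop (𝓝 0) := by
    simpa using ((FloorSemiring.tendsto_pow_div_factorial_atTop (2 * π)).comp hodd).const_mul π
  refine squeeze_zero' (.of_forall fun _ => by positivity) ?_ hlim
  filter_upwards [eventually_ne_atTop 0] with k hk
  obtain ⟨j, hj⟩ : ∃ j, 2 * k = j + 1 := ⟨2 * k - 1, by omega⟩
  calc ‖riemannZeta (1 - 2 * k)‖⁻¹ ≤ (2 * (2 * k - 1)! / (2 * π) ^ (2 * k))⁻¹ :=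
        inv_anti₀ (by positivity) (two_mul_factorial_div_le_norm_riemannZeta_one_sub_two_mul_nat hk)
    _ = π * ((2 * π) ^ (2 * k - 1) / (2 * k - 1)!) := by
        rw [hj, Nat.add_sub_cancel, pow_succ]; field_simp

lemma eSeq_pos (m n : ℕ) : 0 < eSeq m n :=
  mul_pos (by positivity) <| prod_pos fun k hk =>
    one_div_pos.2 <| norm_riemannZeta_one_sub_two_mul_nat_pos (by grind)

lemma eSeq_succ {m n : ℕ} (h : 2 * m + n ≠ 0) :
    eSeq (m + 1) n = eSeq m n * ((2 * m + n) * (2 * m + n + 1) / ((2 * m + 1) * (2 * m + 2)) /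
      ‖riemannZeta (1 - 2 * (m + 1 : ℕ))‖) := by
  have hnum : 2 * (m + 1) + n - 1 = (2 * m + n - 1) + 1 + 1 := by omega
  have hcast : ((2 * m + n - 1 : ℕ) : ℝ) = 2 * m + n - 1 := by
    rw [Nat.cast_sub (by omega)]; push_cast; ring
  unfold eSeq
  rw [prod_Icc_succ_top (by omega), hnum, show 2 * (m + 1) = 2 * m + 1 + 1 by ring]
  simp only [factorial_succ]
  push_cast [hcast]
  field_simp
  ring

theorem tendsto_eSeq_atTop_nhds_zero (n : ℕ) : Tendsto (eSeq · n) atTop (𝓝 0) := by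
  have hratio (m : ℕ) :
      ((2 * m + n) * (2 * m + n + 1) / ((2 * m + 1) * (2 * m + 2)) : ℝ) ≤ (n + 1) ^ 2 := by
    have h₁ : (2 * m + n : ℝ) ≤ (n + 1) * (2 * m + 1) := by nlinarith
    have h₂ : (2 * m + n + 1 : ℝ) ≤ (n + 1) * (2 * m + 2) := by nlinarith
    rw [div_le_iff₀ (by positivity)]
    calc _ ≤ ((n + 1) * (2 * m + 1) : ℝ) * ((n + 1) * (2 * m + 2)) := by gcongr
      _ = _ := by ring
  refine (summable_of_ratio_norm_eventually_le (r := 1 / 2) (by norm_num) ?_).tendsto_atTop_zero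
  have hζ := (tendsto_inv_norm_riemannZeta_one_sub_two_mul_nat.comp
    (tendsto_add_atTop_nat 1)).eventually
      (gt_mem_nhds (show (0 : ℝ) < 1 / (2 * (n + 1) ^ 2) by positivity))
  filter_upwards [hζ, eventually_ne_atTop 0] with m hζm hm
  rw [Real.norm_of_nonneg (eSeq_pos _ _).le, Real.norm_of_nonneg (eSeq_pos _ _).le,
    eSeq_succ (by omega), div_eq_mul_inv _ ‖_‖]
  calc _ ≤ eSeq m n * ((n + 1) ^ 2 * (1 / (2 * (n + 1) ^ 2))) := by
        gcongr
        · exact (eSeq_pos m n).le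
        · exact hratio m
        · exact hζm.le
    _ = 1 / 2 * eSeq m n := by field_simp

theorem eSeq_eventually_lt_one_general (n : ℕ) :
    ∃ M : ℕ, ∀ m : ℕ, M ≤ m →
      eSeq m n < 1 ∧ ¬∃ z : ℤ, eSeq m n = (z : ℝ) := by
  obtain ⟨M, hM⟩ :=
    eventually_atTop.1 ((tendsto_eSeq_atTop_nhds_zero n).eventually (gt_mem_nhds one_pos))
  refine ⟨M, fun m hm => ⟨hM m hm, ?_⟩⟩
  rintro ⟨z, hz⟩
  have h₀ : (0 : ℤ) < z := by exact_mod_cast hz ▸ eSeq_pos m n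
  have h₁ : z < 1 := by exact_mod_cast hz ▸ hM m hm
  omega

/-- For every positive `n` there is `M` such that for all `m ≥ M` we have
`e(m,n) < 1`; in particular `e(m,n)` is not an integer. -/
theorem eSeq_eventually_lt_one (n : ℕ) (hn : 1 ≤ n) :
    ∃ M : ℕ, ∀ m : ℕ, M ≤ m →
      eSeq m n < 1 ∧ ¬∃ z : ℤ, eSeq m n = (z : ℝ) :=
  eSeq_eventually_lt_one_general n
end

section
/- For every integer m with 6 ≤ m ≤ 13, the rational number e(m,1) = ∏_{k=1}^{m} (2k)/|B_{2k}| is not an integer, where B_{2k} denotes the 2k-th Bernoulli number. -/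
open Finset

lemma bp5 : bernoulli' 5 = (0 : ℚ) := by
  rw [bernoulli'_def]
  norm_num [Finset.sum_range_succ, Nat.choose]

lemma bp6 : bernoulli' 6 = (1/42 : ℚ) := by
  rw [bernoulli'_def]
  norm_num [Finset.sum_range_succ, Nat.choose, bp5]

lemma bp7 : bernoulli' 7 = (0 : ℚ) := by
  rw [bernoulli'_def]
  norm_num [Finset.sum_range_succ, Nat.choose, bp5, bp6]

lemma bp8 : bernoulli' 8 = (-1/30 : ℚ) := by
  rw [bernoulli'_def]
  norm_num [Finset.sum_range_succ, Nat.choose, bp5, bp6, bp7]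

lemma bp9 : bernoulli' 9 = (0 : ℚ) := by
  rw [bernoulli'_def]
  norm_num [Finset.sum_range_succ, Nat.choose, bp5, bp6, bp7, bp8]

lemma bp10 : bernoulli' 10 = (5/66 : ℚ) := by
  rw [bernoulli'_def]
  norm_num [Finset.sum_range_succ, Nat.choose, bp5, bp6, bp7, bp8, bp9]

lemma bp11 : bernoulli' 11 = (0 : ℚ) := by
  rw [bernoulli'_def]
  norm_num [Finset.sum_range_succ, Nat.choose, bp5, bp6, bp7, bp8, bp9, bp10]

lemma bp12 : bernoulli' 12 = (-691/2730 : ℚ) := by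
  rw [bernoulli'_def]
  norm_num [Finset.sum_range_succ, Nat.choose, bp5, bp6, bp7, bp8, bp9, bp10, bp11]

lemma bp13 : bernoulli' 13 = (0 : ℚ) := by
  rw [bernoulli'_def]
  norm_num [Finset.sum_range_succ, Nat.choose, bp5, bp6, bp7, bp8, bp9, bp10, bp11, bp12]

lemma bp14 : bernoulli' 14 = (7/6 : ℚ) := by
  rw [bernoulli'_def]
  norm_num [Finset.sum_range_succ, Nat.choose, bp5, bp6, bp7, bp8, bp9, bp10, bp11, bp12, bp13]

lemma bp15 : bernoulli' 15 = (0 : ℚ) := by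
  rw [bernoulli'_def]
  norm_num [Finset.sum_range_succ, Nat.choose, bp5, bp6, bp7, bp8, bp9, bp10, bp11, bp12, bp13, bp14]

lemma bp16 : bernoulli' 16 = (-3617/510 : ℚ) := by
  rw [bernoulli'_def]
  norm_num [Finset.sum_range_succ, Nat.choose, bp5, bp6, bp7, bp8, bp9, bp10, bp11, bp12, bp13, bp14, bp15]

lemma bp17 : bernoulli' 17 = (0 : ℚ) := by
  rw [bernoulli'_def]
  norm_num [Finset.sum_range_succ, Nat.choose, bp5, bp6, bp7, bp8, bp9, bp10, bp11, bp12, bp13, bp14, bp15, bp16]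

lemma bp18 : bernoulli' 18 = (43867/798 : ℚ) := by
  rw [bernoulli'_def]
  norm_num [Finset.sum_range_succ, Nat.choose, bp5, bp6, bp7, bp8, bp9, bp10, bp11, bp12, bp13, bp14, bp15, bp16, bp17]

lemma bp19 : bernoulli' 19 = (0 : ℚ) := by
  rw [bernoulli'_def]
  norm_num [Finset.sum_range_succ, Nat.choose, bp5, bp6, bp7, bp8, bp9, bp10, bp11, bp12, bp13, bp14, bp15, bp16, bp17, bp18]

lemma bp20 : bernoulli' 20 = (-174611/330 : ℚ) := by
  rw [bernoulli'_def]
  norm_num [Finset.sum_range_succ, Nat.choose, bp5, bp6, bp7, bp8, bp9, bp10, bp11, bp12, bp13, bp14, bp15, bp16, bp17, bp18, bp19]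

lemma bp21 : bernoulli' 21 = (0 : ℚ) := by
  rw [bernoulli'_def]
  norm_num [Finset.sum_range_succ, Nat.choose, bp5, bp6, bp7, bp8, bp9, bp10, bp11, bp12, bp13, bp14, bp15, bp16, bp17, bp18, bp19, bp20]

lemma bp22 : bernoulli' 22 = (854513/138 : ℚ) := by
  rw [bernoulli'_def]
  norm_num [Finset.sum_range_succ, Nat.choose, bp5, bp6, bp7, bp8, bp9, bp10, bp11, bp12, bp13, bp14, bp15, bp16, bp17, bp18, bp19, bp20, bp21]

lemma bp23 : bernoulli' 23 = (0 : ℚ) := by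
  rw [bernoulli'_def]
  norm_num [Finset.sum_range_succ, Nat.choose, bp5, bp6, bp7, bp8, bp9, bp10, bp11, bp12, bp13, bp14, bp15, bp16, bp17, bp18, bp19, bp20, bp21, bp22]

lemma bp24 : bernoulli' 24 = (-236364091/2730 : ℚ) := by
  rw [bernoulli'_def]
  norm_num [Finset.sum_range_succ, Nat.choose, bp5, bp6, bp7, bp8, bp9, bp10, bp11, bp12, bp13, bp14, bp15, bp16, bp17, bp18, bp19, bp20, bp21, bp22, bp23]

lemma bp25 : bernoulli' 25 = (0 : ℚ) := by
  rw [bernoulli'_def]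
  norm_num [Finset.sum_range_succ, Nat.choose, bp5, bp6, bp7, bp8, bp9, bp10, bp11, bp12, bp13, bp14, bp15, bp16, bp17, bp18, bp19, bp20, bp21, bp22, bp23, bp24]

lemma bp26 : bernoulli' 26 = (8553103/6 : ℚ) := by
  rw [bernoulli'_def]
  norm_num [Finset.sum_range_succ, Nat.choose, bp5, bp6, bp7, bp8, bp9, bp10, bp11, bp12, bp13, bp14, bp15, bp16, bp17, bp18, bp19, bp20, bp21, bp22, bp23, bp24, bp25]

lemma ab1 : |bernoulli 2| = (1/6 : ℚ) := by
  rw [bernoulli_eq_bernoulli'_of_ne_one (by norm_num), bernoulli'_two]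
  rw [abs_of_nonneg (by norm_num)]

lemma ab2 : |bernoulli 4| = (1/30 : ℚ) := by
  rw [bernoulli_eq_bernoulli'_of_ne_one (by norm_num), bernoulli'_four]
  rw [abs_of_nonpos (by norm_num)]
  norm_num

lemma ab3 : |bernoulli 6| = (1/42 : ℚ) := by
  rw [bernoulli_eq_bernoulli'_of_ne_one (by norm_num), bp6]
  rw [abs_of_nonneg (by norm_num)]

lemma ab4 : |bernoulli 8| = (1/30 : ℚ) := by
  rw [bernoulli_eq_bernoulli'_of_ne_one (by norm_num), bp8]
  rw [abs_of_nonpos (by norm_num)]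
  norm_num

lemma ab5 : |bernoulli 10| = (5/66 : ℚ) := by
  rw [bernoulli_eq_bernoulli'_of_ne_one (by norm_num), bp10]
  rw [abs_of_nonneg (by norm_num)]

lemma ab6 : |bernoulli 12| = (691/2730 : ℚ) := by
  rw [bernoulli_eq_bernoulli'_of_ne_one (by norm_num), bp12]
  rw [abs_of_nonpos (by norm_num)]
  norm_num

lemma ab7 : |bernoulli 14| = (7/6 : ℚ) := by
  rw [bernoulli_eq_bernoulli'_of_ne_one (by norm_num), bp14]
  rw [abs_of_nonneg (by norm_num)]

lemma ab8 : |bernoulli 16| = (3617/510 : ℚ) := by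
  rw [bernoulli_eq_bernoulli'_of_ne_one (by norm_num), bp16]
  rw [abs_of_nonpos (by norm_num)]
  norm_num

lemma ab9 : |bernoulli 18| = (43867/798 : ℚ) := by
  rw [bernoulli_eq_bernoulli'_of_ne_one (by norm_num), bp18]
  rw [abs_of_nonneg (by norm_num)]

lemma ab10 : |bernoulli 20| = (174611/330 : ℚ) := by
  rw [bernoulli_eq_bernoulli'_of_ne_one (by norm_num), bp20]
  rw [abs_of_nonpos (by norm_num)]
  norm_num

lemma ab11 : |bernoulli 22| = (854513/138 : ℚ) := by
  rw [bernoulli_eq_bernoulli'_of_ne_one (by norm_num), bp22]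
  rw [abs_of_nonneg (by norm_num)]

lemma ab12 : |bernoulli 24| = (236364091/2730 : ℚ) := by
  rw [bernoulli_eq_bernoulli'_of_ne_one (by norm_num), bp24]
  rw [abs_of_nonpos (by norm_num)]
  norm_num

lemma ab13 : |bernoulli 26| = (8553103/6 : ℚ) := by
  rw [bernoulli_eq_bernoulli'_of_ne_one (by norm_num), bp26]
  rw [abs_of_nonneg (by norm_num)]

lemma prodstep (f : ℕ → ℚ) (n : ℕ) :
    ∏ k ∈ Icc 1 (n+1), f k = (∏ k ∈ Icc 1 n, f k) * f (n+1) :=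
  Finset.prod_Icc_succ_top (Nat.le_add_left 1 n) f

lemma pr6 : (∏ k ∈ Icc (1:ℕ) 6, (2 * k : ℚ) / |bernoulli (2 * k)|) = (376610217984000/691 : ℚ) := by
  rw [show Icc (1:ℕ) 6 = Icc 1 (5+1) from rfl, prodstep]
  rw [show Icc (1:ℕ) 5 = Icc 1 (4+1) from rfl, prodstep]
  rw [show Icc (1:ℕ) 4 = Icc 1 (3+1) from rfl, prodstep]
  rw [show Icc (1:ℕ) 3 = Icc 1 (2+1) from rfl, prodstep]
  rw [show Icc (1:ℕ) 2 = Icc 1 (1+1) from rfl, prodstep]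
  rw [Finset.Icc_self, Finset.prod_singleton]
  norm_num [ab1, ab2, ab3, ab4, ab5, ab6]

lemma pr7 : (∏ k ∈ Icc (1:ℕ) 7, (2 * k : ℚ) / |bernoulli (2 * k)|) = (4519322615808000/691 : ℚ) := by
  rw [show Icc (1:ℕ) 7 = Icc 1 (6+1) from rfl, prodstep]
  rw [show Icc (1:ℕ) 6 = Icc 1 (5+1) from rfl, prodstep]
  rw [show Icc (1:ℕ) 5 = Icc 1 (4+1) from rfl, prodstep]
  rw [show Icc (1:ℕ) 4 = Icc 1 (3+1) from rfl, prodstep]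
  rw [show Icc (1:ℕ) 3 = Icc 1 (2+1) from rfl, prodstep]
  rw [show Icc (1:ℕ) 2 = Icc 1 (1+1) from rfl, prodstep]
  rw [Finset.Icc_self, Finset.prod_singleton]
  norm_num [ab1, ab2, ab3, ab4, ab5, ab6, ab7]

lemma pr8 : (∏ k ∈ Icc (1:ℕ) 8, (2 * k : ℚ) / |bernoulli (2 * k)|) = (36877672544993280000/2499347 : ℚ) := by
  rw [show Icc (1:ℕ) 8 = Icc 1 (7+1) from rfl, prodstep]
  rw [show Icc (1:ℕ) 7 = Icc 1 (6+1) from rfl, prodstep]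
  rw [show Icc (1:ℕ) 6 = Icc 1 (5+1) from rfl, prodstep]
  rw [show Icc (1:ℕ) 5 = Icc 1 (4+1) from rfl, prodstep]
  rw [show Icc (1:ℕ) 4 = Icc 1 (3+1) from rfl, prodstep]
  rw [show Icc (1:ℕ) 3 = Icc 1 (2+1) from rfl, prodstep]
  rw [show Icc (1:ℕ) 2 = Icc 1 (1+1) from rfl, prodstep]
  rw [Finset.Icc_self, Finset.prod_singleton]
  norm_num [ab1, ab2, ab3, ab4, ab5, ab6, ab7, ab8]

lemma pr9 : (∏ k ∈ Icc (1:ℕ) 9, (2 * k : ℚ) / |bernoulli (2 * k)|) = (529710888436283473920000/109638854849 : ℚ) := by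
  rw [show Icc (1:ℕ) 9 = Icc 1 (8+1) from rfl, prodstep]
  rw [show Icc (1:ℕ) 8 = Icc 1 (7+1) from rfl, prodstep]
  rw [show Icc (1:ℕ) 7 = Icc 1 (6+1) from rfl, prodstep]
  rw [show Icc (1:ℕ) 6 = Icc 1 (5+1) from rfl, prodstep]
  rw [show Icc (1:ℕ) 5 = Icc 1 (4+1) from rfl, prodstep]
  rw [show Icc (1:ℕ) 4 = Icc 1 (3+1) from rfl, prodstep]
  rw [show Icc (1:ℕ) 3 = Icc 1 (2+1) from rfl, prodstep]
  rw [show Icc (1:ℕ) 2 = Icc 1 (1+1) from rfl, prodstep]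
  rw [Finset.Icc_self, Finset.prod_singleton]
  norm_num [ab1, ab2, ab3, ab4, ab5, ab6, ab7, ab8, ab9]

lemma pr10 : (∏ k ∈ Icc (1:ℕ) 10, (2 * k : ℚ) / |bernoulli (2 * k)|) = (3496091863679470927872000000/19144150084038739 : ℚ) := by
  rw [show Icc (1:ℕ) 10 = Icc 1 (9+1) from rfl, prodstep]
  rw [show Icc (1:ℕ) 9 = Icc 1 (8+1) from rfl, prodstep]
  rw [show Icc (1:ℕ) 8 = Icc 1 (7+1) from rfl, prodstep]
  rw [show Icc (1:ℕ) 7 = Icc 1 (6+1) from rfl, prodstep]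
  rw [show Icc (1:ℕ) 6 = Icc 1 (5+1) from rfl, prodstep]
  rw [show Icc (1:ℕ) 5 = Icc 1 (4+1) from rfl, prodstep]
  rw [show Icc (1:ℕ) 4 = Icc 1 (3+1) from rfl, prodstep]
  rw [show Icc (1:ℕ) 3 = Icc 1 (2+1) from rfl, prodstep]
  rw [show Icc (1:ℕ) 2 = Icc 1 (1+1) from rfl, prodstep]
  rw [Finset.Icc_self, Finset.prod_singleton]
  norm_num [ab1, ab2, ab3, ab4, ab5, ab6, ab7, ab8, ab9, ab10]

lemma pr11 : (∏ k ∈ Icc (1:ℕ) 11, (2 * k : ℚ) / |bernoulli (2 * k)|) = (964921354375533976092672000000/1487175010978381361737 : ℚ) := by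
  rw [show Icc (1:ℕ) 11 = Icc 1 (10+1) from rfl, prodstep]
  rw [show Icc (1:ℕ) 10 = Icc 1 (9+1) from rfl, prodstep]
  rw [show Icc (1:ℕ) 9 = Icc 1 (8+1) from rfl, prodstep]
  rw [show Icc (1:ℕ) 8 = Icc 1 (7+1) from rfl, prodstep]
  rw [show Icc (1:ℕ) 7 = Icc 1 (6+1) from rfl, prodstep]
  rw [show Icc (1:ℕ) 6 = Icc 1 (5+1) from rfl, prodstep]
  rw [show Icc (1:ℕ) 5 = Icc 1 (4+1) from rfl, prodstep]
  rw [show Icc (1:ℕ) 4 = Icc 1 (3+1) from rfl, prodstep]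
  rw [show Icc (1:ℕ) 3 = Icc 1 (2+1) from rfl, prodstep]
  rw [show Icc (1:ℕ) 2 = Icc 1 (1+1) from rfl, prodstep]
  rw [Finset.Icc_self, Finset.prod_singleton]
  norm_num [ab1, ab2, ab3, ab4, ab5, ab6, ab7, ab8, ab9, ab10, ab11]

lemma pr12 : (∏ k ∈ Icc (1:ℕ) 12, (2 * k : ℚ) / |bernoulli (2 * k)|) = (63221647138684986113591869440000000/351514769627820131218308186067 : ℚ) := by
  rw [show Icc (1:ℕ) 12 = Icc 1 (11+1) from rfl, prodstep]
  rw [show Icc (1:ℕ) 11 = Icc 1 (10+1) from rfl, prodstep]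
  rw [show Icc (1:ℕ) 10 = Icc 1 (9+1) from rfl, prodstep]
  rw [show Icc (1:ℕ) 9 = Icc 1 (8+1) from rfl, prodstep]
  rw [show Icc (1:ℕ) 8 = Icc 1 (7+1) from rfl, prodstep]
  rw [show Icc (1:ℕ) 7 = Icc 1 (6+1) from rfl, prodstep]
  rw [show Icc (1:ℕ) 6 = Icc 1 (5+1) from rfl, prodstep]
  rw [show Icc (1:ℕ) 5 = Icc 1 (4+1) from rfl, prodstep]
  rw [show Icc (1:ℕ) 4 = Icc 1 (3+1) from rfl, prodstep]
  rw [show Icc (1:ℕ) 3 = Icc 1 (2+1) from rfl, prodstep]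
  rw [show Icc (1:ℕ) 2 = Icc 1 (1+1) from rfl, prodstep]
  rw [Finset.Icc_self, Finset.prod_singleton]
  norm_num [ab1, ab2, ab3, ab4, ab5, ab6, ab7, ab8, ab9, ab10, ab11, ab12]

lemma pr13 : (∏ k ∈ Icc (1:ℕ) 13, (2 * k : ℚ) / |bernoulli (2 * k)|) = (758659765664219833363102433280000000/231272463896001326752592723167247377 : ℚ) := by
  rw [show Icc (1:ℕ) 13 = Icc 1 (12+1) from rfl, prodstep]
  rw [show Icc (1:ℕ) 12 = Icc 1 (11+1) from rfl, prodstep]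
  rw [show Icc (1:ℕ) 11 = Icc 1 (10+1) from rfl, prodstep]
  rw [show Icc (1:ℕ) 10 = Icc 1 (9+1) from rfl, prodstep]
  rw [show Icc (1:ℕ) 9 = Icc 1 (8+1) from rfl, prodstep]
  rw [show Icc (1:ℕ) 8 = Icc 1 (7+1) from rfl, prodstep]
  rw [show Icc (1:ℕ) 7 = Icc 1 (6+1) from rfl, prodstep]
  rw [show Icc (1:ℕ) 6 = Icc 1 (5+1) from rfl, prodstep]
  rw [show Icc (1:ℕ) 5 = Icc 1 (4+1) from rfl, prodstep]
  rw [show Icc (1:ℕ) 4 = Icc 1 (3+1) from rfl, prodstep]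
  rw [show Icc (1:ℕ) 3 = Icc 1 (2+1) from rfl, prodstep]
  rw [show Icc (1:ℕ) 2 = Icc 1 (1+1) from rfl, prodstep]
  rw [Finset.Icc_self, Finset.prod_singleton]
  norm_num [ab1, ab2, ab3, ab4, ab5, ab6, ab7, ab8, ab9, ab10, ab11, ab12, ab13]

/-- For `6 ≤ m ≤ 13`, the rational number `e(m,1) = ∏_{k=1}^m (2k)/|B_{2k}|`
is not an integer. -/
theorem e_m_one_not_integer_of_le (m : ℕ) (h6 : 6 ≤ m) (h13 : m ≤ 13) :
    ¬∃ z : ℤ, (∏ k ∈ Icc 1 m, (2 * k : ℚ) / |bernoulli (2 * k)|) = (z : ℚ) := by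
  rintro ⟨z, hz⟩
  interval_cases m
  · rw [pr6] at hz
    have h2 : (376610217984000 : ℚ) = 691 * z := by
      field_simp at hz
      linarith
    have h3 : (376610217984000 : ℤ) = 691 * z := by exact_mod_cast h2
    omega
  · rw [pr7] at hz
    have h2 : (4519322615808000 : ℚ) = 691 * z := by
      field_simp at hz
      linarith
    have h3 : (4519322615808000 : ℤ) = 691 * z := by exact_mod_cast h2
    omega
  · rw [pr8] at hz
    have h2 : (36877672544993280000 : ℚ) = 2499347 * z := by
      field_simp at hz
      linarith
    have h3 : (36877672544993280000 : ℤ) = 2499347 * z := by exact_mod_cast h2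
    omega
  · rw [pr9] at hz
    have h2 : (529710888436283473920000 : ℚ) = 109638854849 * z := by
      field_simp at hz
      linarith
    have h3 : (529710888436283473920000 : ℤ) = 109638854849 * z := by exact_mod_cast h2
    omega
  · rw [pr10] at hz
    have h2 : (3496091863679470927872000000 : ℚ) = 19144150084038739 * z := by
      field_simp at hz
      linarith
    have h3 : (3496091863679470927872000000 : ℤ) = 19144150084038739 * z := by exact_mod_cast h2
    omega
  · rw [pr11] at hz
    have h2 : (964921354375533976092672000000 : ℚ) = 1487175010978381361737 * z := by
      field_simp at hz
      linarith
    have h3 : (964921354375533976092672000000 : ℤ) = 1487175010978381361737 * z := by exact_mod_cast h2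
    omega
  · rw [pr12] at hz
    have h2 : (63221647138684986113591869440000000 : ℚ) = 351514769627820131218308186067 * z := by
      field_simp at hz
      linarith
    have h3 : (63221647138684986113591869440000000 : ℤ) = 351514769627820131218308186067 * z := by exact_mod_cast h2
    omega
  · rw [pr13] at hz
    have h2 : (758659765664219833363102433280000000 : ℚ) = 231272463896001326752592723167247377 * z := by
      field_simp at hz
      linarith
    have h3 : (758659765664219833363102433280000000 : ℤ) = 231272463896001326752592723167247377 * z := by exact_mod_cast h2
    omega
end

section
/- For every integer m ≥ 6, the rational number e(m,1) = ∏_{k=1}^{m} (2k)/|B_{2k}| is not an integer. -/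
/-!
For `6 ≤ m ≤ 13` the product is computed exactly: the prime `691` from the numerator of `B₁₂`
survives in its denominator. For `k ≥ 14` the bound `ζ(2k) ≥ 1` gives
`|B_{2k}| ≥ 2 (2k)! / (2π)^{2k} ≥ 8k`, so each further factor is at most `1/4`; since
`e(13,1) < 4`, every `e(m,1)` with `m ≥ 14` lies strictly between `0` and `1`.
-/

open Finset
open scoped Nat

/-- A memoised `bernoulli'` that the kernel can evaluate: unfolding `bernoulli'` itself takes
exponential time. -/
def bernoulli'List : ℕ → List ℚ
  | 0 => []
  | n + 1 =>
    let l := bernoulli'List n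
    l ++ [1 - ∑ k ∈ range n, (n.choose k : ℚ) / (n - k + 1) * l.getD k 0]

theorem bernoulli'List_eq_map (n : ℕ) : bernoulli'List n = (List.range n).map bernoulli' := by
  induction n with
  | zero => rfl
  | succ n ih =>
    rw [bernoulli'List, ih, List.range_succ, List.map_append, List.map_singleton,
      bernoulli'_def n]
    congr 3
    refine sum_congr rfl fun k hk => ?_
    rw [List.getD_eq_getElem _ _ (by simpa using hk)]
    simp

theorem bernoulli_eq_getD_bernoulli'List {n N : ℕ} (hn : n ≠ 1) (hN : n < N) :
    bernoulli n = (bernoulli'List N).getD n 0 := by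
  rw [bernoulli'List_eq_map, List.getD_eq_getElem _ _ (by simpa using hN)]
  simp [bernoulli_eq_bernoulli'_of_ne_one hn]

theorem two_mul_factorial_le_abs_bernoulli {k : ℕ} (hk : k ≠ 0) :
    2 * ((2 * k)! : ℝ) ≤ (2 * Real.pi) ^ (2 * k) * |(bernoulli (2 * k) : ℝ)| := by
  have hζ : 1 ≤ (-1 : ℝ) ^ (k + 1) * 2 ^ (2 * k - 1) * Real.pi ^ (2 * k) *
      bernoulli (2 * k) / (2 * k)! := by
    simpa using le_hasSum (hasSum_zeta_nat hk) 1 fun n _ => by positivity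
  have h2 : (2 : ℝ) ^ (2 * k) = 2 * 2 ^ (2 * k - 1) := by
    rw [← pow_succ', Nat.sub_add_cancel (by omega)]
  have := hζ.trans (le_abs_self _)
  simp only [abs_div, abs_mul, abs_pow, abs_neg, abs_one, one_pow, one_mul, abs_two,
    abs_of_pos Real.pi_pos, Nat.abs_cast] at this
  rw [one_le_div (by positivity)] at this
  rw [mul_pow, h2]
  nlinarith

theorem abs_bernoulli_two_mul_pos {k : ℕ} (hk : k ≠ 0) : 0 < |bernoulli (2 * k)| := by
  have h := two_mul_factorial_le_abs_bernoulli hk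
  have : (0 : ℝ) < |(bernoulli (2 * k) : ℝ)| :=
    pos_of_mul_pos_right ((by positivity : (0 : ℝ) < 2 * (2 * k)!).trans_le h) (by positivity)
  exact_mod_cast this

theorem four_mul_mul_forty_pow_le_factorial {k : ℕ} (hk : 14 ≤ k) :
    4 * k * 40 ^ k ≤ (2 * k)! := by
  induction k, hk using Nat.le_induction with
  | base => decide
  | succ k hk ih =>
    rw [show 2 * (k + 1) = 2 * k + 1 + 1 by ring, Nat.factorial_succ, Nat.factorial_succ]
    calc 4 * (k + 1) * 40 ^ (k + 1) = 40 * (k + 1) * 4 * 40 ^ k := by ring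
      _ ≤ (2 * k + 1 + 1) * (2 * k + 1) * k * 4 * 40 ^ k := by
        have h20 : 20 ≤ (2 * k + 1) * k := by nlinarith
        gcongr ?_ * 4 * 40 ^ k
        nlinarith
      _ = (2 * k + 1 + 1) * ((2 * k + 1) * (4 * k * 40 ^ k)) := by ring
      _ ≤ (2 * k + 1 + 1) * ((2 * k + 1) * (2 * k)!) := by gcongr

theorem eight_mul_le_abs_bernoulli {k : ℕ} (hk : 14 ≤ k) :
    (8 * k : ℚ) ≤ |bernoulli (2 * k)| := by
  have hfact : (4 * k * 40 ^ k : ℝ) ≤ (2 * k)! := by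
    exact_mod_cast four_mul_mul_forty_pow_le_factorial hk
  have hπ : (2 * Real.pi) ^ (2 * k) ≤ 40 ^ k := by
    rw [pow_mul]
    exact pow_le_pow_left₀ (by positivity) (by nlinarith [Real.pi_pos, Real.pi_lt_d2]) k
  have : (8 * k : ℝ) ≤ |(bernoulli (2 * k) : ℝ)| := by
    refine le_of_mul_le_mul_left ?_ (by positivity : (0 : ℝ) < 40 ^ k)
    calc (40 : ℝ) ^ k * (8 * k) = 2 * (4 * k * 40 ^ k) := by ring
      _ ≤ 2 * (2 * k)! := by gcongr
      _ ≤ (2 * Real.pi) ^ (2 * k) * |(bernoulli (2 * k) : ℝ)| :=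
        two_mul_factorial_le_abs_bernoulli (by omega)
      _ ≤ 40 ^ k * |(bernoulli (2 * k) : ℝ)| := by gcongr
  exact_mod_cast this

theorem two_mul_div_abs_bernoulli_le {k : ℕ} (hk : 14 ≤ k) :
    (2 * k : ℚ) / |bernoulli (2 * k)| ≤ 1 / 4 := by
  have hB := eight_mul_le_abs_bernoulli hk
  have hk' : (14 : ℚ) ≤ k := by exact_mod_cast hk
  rw [div_le_iff₀ (by linarith)]
  linarith

def bernoulliProduct (m : ℕ) : ℚ := ∏ k ∈ Icc 1 m, (2 * k : ℚ) / |bernoulli (2 * k)|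

theorem bernoulliProduct_succ (m : ℕ) :
    bernoulliProduct (m + 1) =
      bernoulliProduct m * ((2 * (m + 1 : ℕ) : ℚ) / |bernoulli (2 * (m + 1))|) :=
  prod_Icc_succ_top (by omega) _

theorem bernoulliProduct_pos (m : ℕ) : 0 < bernoulliProduct m :=
  prod_pos fun k hk => div_pos (by have := (mem_Icc.1 hk).1; positivity)
    (abs_bernoulli_two_mul_pos (by have := (mem_Icc.1 hk).1; omega))

theorem bernoulliProduct_eq_getD_bernoulli'List {m N : ℕ} (hN : 2 * m < N) :
    bernoulliProduct m = ∏ k ∈ Icc 1 m, (2 * k : ℚ) / |(bernoulli'List N).getD (2 * k) 0| :=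
  prod_congr rfl fun k hk => by
    rw [bernoulli_eq_getD_bernoulli'List (N := N) (by omega)
      (by have := (mem_Icc.1 hk).2; omega)]

theorem bernoulliProduct_thirteen_lt_four : bernoulliProduct 13 < 4 := by
  rw [bernoulliProduct_eq_getD_bernoulli'List (N := 27) (by norm_num)]
  decide +kernel

theorem bernoulliProduct_lt_one {m : ℕ} (hm : 14 ≤ m) : bernoulliProduct m < 1 := by
  induction m, hm using Nat.le_induction with
  | base =>
    rw [bernoulliProduct_succ]
    have h14 := two_mul_div_abs_bernoulli_le (le_refl 14)
    nlinarith [bernoulliProduct_pos 13, bernoulliProduct_thirteen_lt_four]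
  | succ m hm ih =>
    rw [bernoulliProduct_succ]
    exact mul_lt_one_of_nonneg_of_lt_one_left (bernoulliProduct_pos m).le ih
      ((two_mul_div_abs_bernoulli_le (by omega)).trans (by norm_num))

theorem bernoulliProduct_den_ne_one {m : ℕ} (hm : 6 ≤ m) : (bernoulliProduct m).den ≠ 1 := by
  rcases le_or_gt m 13 with h13 | h14
  · rw [bernoulliProduct_eq_getD_bernoulli'List (N := 27) (by omega)]
    revert m
    decide +kernel
  · intro hden
    have h0 := Rat.num_pos.2 (bernoulliProduct_pos m)
    have h1 : ((bernoulliProduct m).num : ℚ) < 1 :=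
      (Rat.coe_int_num_of_den_eq_one hden) ▸ bernoulliProduct_lt_one h14
    have h1' : (bernoulliProduct m).num < 1 := by exact_mod_cast h1
    omega

/-- For every `m ≥ 6`, the rational number `e(m,1) = ∏_{k=1}^m (2k)/|B_{2k}|`
is not an integer. -/
theorem e_m_one_not_integer (m : ℕ) (hm : 6 ≤ m) :
    ¬∃ z : ℤ, (∏ k ∈ Icc 1 m, (2 * k : ℚ) / |bernoulli (2 * k)|) = (z : ℚ) := by
  rintro ⟨z, hz⟩
  exact bernoulliProduct_den_ne_one hm (by rw [bernoulliProduct, hz, Rat.den_intCast])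
end

section
/- (von Staudt) If p is a prime and 2k < p - 1 for a positive integer k, then p does not divide the denominator of the Bernoulli number B_{2k} (written in lowest terms). -/
/-! By von Staudt–Clausen, `B_{2k}` is an integer minus `∑ 1/q` over the primes `q` with
`q - 1 ∣ 2k`. When `0 < 2k < p - 1` the prime `p` is not among them, and a sum of reciprocals
of primes other than `p` has denominator dividing their product, hence prime to `p`. -/

open Finset

theorem Rat.not_dvd_den_sum_one_div_primes {ι : Type*} (s : Finset ι) (q : ι → ℕ) {p : ℕ}
    (hp : p.Prime) (hq : ∀ i ∈ s, (q i).Prime ∧ q i ≠ p) :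
    ¬ p ∣ (∑ i ∈ s, (1 : ℚ) / q i).den := by
  intro hdvd
  have hprod : p ∣ ∏ i ∈ s, q i := by
    refine hdvd.trans ((Rat.den_sum_dvd_prod_den s _).trans (dvd_of_eq (prod_congr rfl ?_)))
    intro i hi
    simp [(hq i hi).1.ne_zero]
  obtain ⟨i, hi, hpi⟩ := (Prime.dvd_finsetProd_iff hp.prime _).mp hprod
  exact (hq i hi).2 ((Nat.prime_dvd_prime_iff_eq hp (hq i hi).1).mp hpi).symm

theorem not_dvd_den_bernoulli_of_not_sub_one_dvd {p k : ℕ} (hp : p.Prime)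
    (hpk : ¬ (p - 1) ∣ 2 * k) : ¬ p ∣ (bernoulli (2 * k)).den := by
  obtain ⟨n, hn⟩ := Bernoulli.vonStaudt_clausen k
  have hp_absent :
      ∀ q ∈ {q ∈ range (2 * k + 2) | q.Prime ∧ (q - 1) ∣ 2 * k}, q.Prime ∧ q ≠ p := by
    intro q hq
    obtain ⟨-, hq_prime, hq_dvd⟩ := mem_filter.mp hq
    exact ⟨hq_prime, by rintro rfl; exact hpk hq_dvd⟩
  rw [eq_sub_of_add_eq hn.symm]
  intro hdvd
  exact Rat.not_dvd_den_sum_one_div_primes _ id hp hp_absent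
    (hdvd.trans ((Rat.sub_den_dvd (n : ℚ) _).trans (by simp)))

/-- (von Staudt) If `p` is prime and `2k < p - 1` for a positive integer `k`,
then `p` does not divide the denominator of `B_{2k}`. -/
theorem von_staudt (p k : ℕ) (hp : p.Prime) (hk : 1 ≤ k) (h : 2 * k < p - 1) :
    ¬ p ∣ (bernoulli (2 * k)).den :=
  not_dvd_den_bernoulli_of_not_sub_one_dvd hp fun hdvd ↦
    absurd (Nat.le_of_dvd (by omega) hdvd) (by omega)
end

section
/- Suppose rational numbers satisfy e(M) = t·s where s = ∏_{k=1}^{g} ζ(1-2k) for some g ≥ 1, e(M) = ζ(1-2g')/(2-2g') with g' = g+1, and t is required to be an integer (t = χ_ℚ of a space). If the resulting value t = (1/(2-2g'))·∏_{k=1}^{g'-1} 1/ζ(1-2k) is not an integer, then no such integer t exists. Concretely: for g' ≥ 7, the rational number (1/(2-2g'))·∏_{k=1}^{g'-1} 1/ζ(1-2k) is not an integer. -/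
/-!
Since `ζ(1 - 2k) = -B_{2k} / (2k)`, the number `t(g) = (2 - 2g)⁻¹ ∏_{k<g} ζ(1 - 2k)⁻¹` is rational.
For `7 ≤ g ≤ 13` a direct computation from `B_2, …, B_24` shows that it is not an integer (its
denominator is divisible by 691, the numerator of `B_12`). For `g ≥ 14` the estimate `ζ(2k) ≥ 1`,
i.e. `|B_{2k}| ≥ 2 (2k)! / (2π)^{2k}`, bounds each factor by `k (2π)^{2k} / (2k)!`; these bounds are
at most 1 for `k ≥ 9` and the first thirteen multiply to less than `26 ≤ 2g - 2`, so `0 < |t(g)| < 1`.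
-/

open Finset Real
open scoped Nat

theorem riemannZeta_one_sub_two_mul_nat {k : ℕ} (hk : k ≠ 0) :
    riemannZeta (1 - 2 * k) = -bernoulli' (2 * k) / (2 * k) := by
  have h : (1 - 2 * k : ℂ) = -↑(2 * k - 1) := by
    push_cast [Nat.cast_sub (by omega : 1 ≤ 2 * k)]; ring
  rw [h, riemannZeta_neg_nat_eq_bernoulli', Nat.sub_add_cancel (by omega)]
  push_cast [Nat.cast_sub (by omega : 1 ≤ 2 * k)]
  ring

theorem factorial_le_abs_bernoulli' {k : ℕ} (hk : k ≠ 0) :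
    ((2 * k)! : ℝ) ≤ 2 ^ (2 * k - 1) * π ^ (2 * k) * |(bernoulli' (2 * k) : ℝ)| := by
  have hζ :
      1 ≤ (-1 : ℝ) ^ (k + 1) * 2 ^ (2 * k - 1) * π ^ (2 * k) * bernoulli (2 * k) / (2 * k)! := by
    simpa using le_hasSum (hasSum_zeta_nat hk) 1 (fun n _ => by positivity)
  rw [bernoulli_eq_bernoulli'_of_ne_one (by omega), le_div_iff₀ (by positivity), one_mul] at hζ
  calc _ ≤ _ := hζ
    _ ≤ _ := le_abs_self _
    _ = _ := by simp [abs_mul, abs_of_pos pi_pos]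

theorem bernoulli'_two_mul_ne_zero {k : ℕ} (hk : k ≠ 0) : bernoulli' (2 * k) ≠ 0 := by
  intro h
  have := factorial_le_abs_bernoulli' hk
  rw [h, Rat.cast_zero, abs_zero, mul_zero] at this
  exact (Nat.cast_pos.2 (Nat.factorial_pos _)).not_ge this

noncomputable def invZetaBound (k : ℕ) : ℝ := k * (2 * π) ^ (2 * k) / (2 * k)!

theorem abs_two_mul_div_bernoulli'_le {k : ℕ} (hk : k ≠ 0) :
    |(2 * k / bernoulli' (2 * k) : ℝ)| ≤ invZetaBound k := by
  have hB : 0 < |(bernoulli' (2 * k) : ℝ)| := by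
    simpa using bernoulli'_two_mul_ne_zero hk
  have h2 : (2 * π) ^ (2 * k) = 2 * (2 ^ (2 * k - 1) * π ^ (2 * k)) := by
    rw [mul_pow, ← mul_assoc, ← pow_succ', Nat.sub_add_cancel (by omega)]
  rw [invZetaBound, abs_div, abs_of_nonneg (by positivity), div_le_div_iff₀ hB (by positivity), h2]
  nlinarith [factorial_le_abs_bernoulli' hk, (by positivity : (0 : ℝ) ≤ k)]

theorem invZetaBound_le (k : ℕ) : invZetaBound k ≤ k * 6.3 ^ (2 * k) / (2 * k)! := by
  unfold invZetaBound
  gcongr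
  linarith [pi_lt_d2]

theorem invZetaBound_succ_le {k : ℕ} (hk : 3 ≤ k) : invZetaBound (k + 1) ≤ invZetaBound k := by
  have hk' : (3 : ℝ) ≤ k := by exact_mod_cast hk
  have hπ : (k + 1) * (2 * π) ^ 2 ≤ k * ((2 * k + 1) * (2 * k + 2)) := by
    have h40 : (2 * π) ^ 2 ≤ 40 := by nlinarith [pi_lt_d2, pi_pos]
    have h42 : 40 ≤ 2 * (k : ℝ) * (2 * k + 1) := by nlinarith
    nlinarith [mul_le_mul_of_nonneg_left (h40.trans h42) (by positivity : (0 : ℝ) ≤ k + 1)]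
  have hfact : ((2 * (k + 1))! : ℝ) = (2 * k + 1) * (2 * k + 2) * (2 * k)! := by
    rw [show 2 * (k + 1) = 2 * k + 1 + 1 by ring, Nat.factorial_succ, Nat.factorial_succ]
    push_cast; ring
  rw [invZetaBound, invZetaBound, hfact, show 2 * (k + 1) = 2 * k + 2 by ring, pow_add,
    div_le_div_iff₀ (by positivity) (by positivity)]
  push_cast
  nlinarith [mul_le_mul_of_nonneg_right hπ (by positivity : 0 ≤ (2 * π) ^ (2 * k) * ((2 * k)! : ℝ))]

theorem invZetaBound_le_one {k : ℕ} (hk : 9 ≤ k) : invZetaBound k ≤ 1 := by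
  induction k, hk using Nat.le_induction with
  | base => exact (invZetaBound_le 9).trans (by norm_num [Nat.factorial])
  | succ k hk ih => exact (invZetaBound_succ_le (by omega)).trans ih

theorem prod_invZetaBound_lt {n : ℕ} (hn : 13 ≤ n) : ∏ k ∈ Icc 1 n, invZetaBound k < 26 := by
  induction n, hn using Nat.le_induction with
  | base =>
    calc _ ≤ ∏ k ∈ Icc 1 13, (k * 6.3 ^ (2 * k) / (2 * k)! : ℝ) :=
          prod_le_prod (fun k _ => by unfold invZetaBound; positivity) fun k _ => invZetaBound_le k
      _ < 26 := by norm_num [prod_Icc_succ_top, Nat.factorial]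
  | succ n hn ih =>
    rw [prod_Icc_succ_top (by omega)]
    calc _ ≤ (∏ k ∈ Icc 1 n, invZetaBound k) * 1 :=
          mul_le_mul_of_nonneg_left (invZetaBound_le_one (by omega))
            (prod_nonneg fun k _ => by unfold invZetaBound; positivity)
      _ < 26 := by rwa [mul_one]

def chiTorelli (g : ℕ) : ℚ :=
  (2 - 2 * (g : ℚ))⁻¹ * ∏ k ∈ Icc 1 (g - 1), (-(2 * k) / bernoulli' (2 * k))

theorem cast_chiTorelli (g : ℕ) :
    (chiTorelli g : ℂ) =
      1 / (2 - 2 * (g : ℂ)) * ∏ k ∈ Icc 1 (g - 1), (riemannZeta (1 - 2 * (k : ℂ)))⁻¹ := by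
  rw [chiTorelli]
  push_cast
  congr 1
  · exact (one_div _).symm
  refine prod_congr rfl fun k hk => ?_
  rw [riemannZeta_one_sub_two_mul_nat (by grind), inv_div, neg_div, div_neg]

theorem chiTorelli_ne_zero {g : ℕ} (hg : g ≠ 1) : chiTorelli g ≠ 0 := by
  have h : (2 - 2 * (g : ℚ)) ≠ 0 := by
    intro h; exact hg (by exact_mod_cast (by linarith : (g : ℚ) = 1))
  refine mul_ne_zero (inv_ne_zero h) (prod_ne_zero_iff.2 fun k hk => ?_)
  have hk : k ≠ 0 := by grind
  exact div_ne_zero (by simpa using hk) (bernoulli'_two_mul_ne_zero hk)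

theorem abs_chiTorelli_lt_one {g : ℕ} (hg : 14 ≤ g) : |chiTorelli g| < 1 := by
  have hg' : (14 : ℝ) ≤ g := by exact_mod_cast hg
  have hprod : |∏ k ∈ Icc 1 (g - 1), (-(2 * k) / bernoulli' (2 * k) : ℝ)| < 26 := by
    rw [abs_prod]
    refine lt_of_le_of_lt (prod_le_prod (fun _ _ => abs_nonneg _) fun k hk => ?_)
      (prod_invZetaBound_lt (by omega))
    rw [neg_div, abs_neg]
    exact abs_two_mul_div_bernoulli'_le (by grind)
  have h : |(chiTorelli g : ℝ)| < 1 := by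
    rw [chiTorelli]
    push_cast
    rw [abs_mul, abs_inv, abs_of_neg (by linarith), inv_mul_lt_iff₀ (by linarith)]
    linarith
  exact_mod_cast h

@[simp] theorem bernoulli'_six : bernoulli' 6 = 1 / 42 := by
  rw [bernoulli'_def]; norm_num [sum_range_succ, bernoulli'_eq_zero_of_odd, Nat.choose]

@[simp] theorem bernoulli'_eight : bernoulli' 8 = -1 / 30 := by
  rw [bernoulli'_def]; norm_num [sum_range_succ, bernoulli'_eq_zero_of_odd, Nat.choose]

@[simp] theorem bernoulli'_ten : bernoulli' 10 = 5 / 66 := by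
  rw [bernoulli'_def]; norm_num [sum_range_succ, bernoulli'_eq_zero_of_odd, Nat.choose]

@[simp] theorem bernoulli'_twelve : bernoulli' 12 = -691 / 2730 := by
  rw [bernoulli'_def]; norm_num [sum_range_succ, bernoulli'_eq_zero_of_odd, Nat.choose]

@[simp] theorem bernoulli'_fourteen : bernoulli' 14 = 7 / 6 := by
  rw [bernoulli'_def]; norm_num [sum_range_succ, bernoulli'_eq_zero_of_odd, Nat.choose]

@[simp] theorem bernoulli'_sixteen : bernoulli' 16 = -3617 / 510 := by
  rw [bernoulli'_def]; norm_num [sum_range_succ, bernoulli'_eq_zero_of_odd, Nat.choose]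

@[simp] theorem bernoulli'_eighteen : bernoulli' 18 = 43867 / 798 := by
  rw [bernoulli'_def]; norm_num [sum_range_succ, bernoulli'_eq_zero_of_odd, Nat.choose]

@[simp] theorem bernoulli'_twenty : bernoulli' 20 = -174611 / 330 := by
  rw [bernoulli'_def]; norm_num [sum_range_succ, bernoulli'_eq_zero_of_odd, Nat.choose]

@[simp] theorem bernoulli'_twentyTwo : bernoulli' 22 = 854513 / 138 := by
  rw [bernoulli'_def]; norm_num [sum_range_succ, bernoulli'_eq_zero_of_odd, Nat.choose]

@[simp] theorem bernoulli'_twentyFour : bernoulli' 24 = -236364091 / 2730 := by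
  rw [bernoulli'_def]; norm_num [sum_range_succ, bernoulli'_eq_zero_of_odd, Nat.choose]

theorem chiTorelli_den_ne_one {g : ℕ} (h7 : 7 ≤ g) (h13 : g ≤ 13) : (chiTorelli g).den ≠ 1 := by
  interval_cases g <;> norm_num [chiTorelli, prod_Icc_succ_top]

/-- For `g' ≥ 7`, the rational number `(1/(2-2g'))·∏_{k=1}^{g'-1} 1/ζ(1-2k)`
is not an integer. -/
theorem chi_torelli_not_integer (g' : ℕ) (hg : 7 ≤ g') :
    ¬∃ z : ℤ, (1 / (2 - 2 * (g' : ℂ))) *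
        ∏ k ∈ Icc 1 (g' - 1), (riemannZeta (1 - 2 * (k : ℂ)))⁻¹ = (z : ℂ) := by
  rintro ⟨z, hz⟩
  rw [← cast_chiTorelli] at hz
  have hq : chiTorelli g' = z := by exact_mod_cast hz
  rcases le_or_gt g' 13 with hsmall | hlarge
  · exact chiTorelli_den_ne_one hg hsmall (hq ▸ Rat.den_intCast z)
  · have hz0 : z ≠ 0 := by
      rintro rfl
      exact chiTorelli_ne_zero (g := g') (by omega) (by exact_mod_cast hq)
    have h := abs_chiTorelli_lt_one (g := g') (by omega)
    rw [hq] at h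
    exact hz0 (Int.abs_lt_one_iff.1 (by exact_mod_cast h))
end
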